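/- arXiv:math/0409007 — 6 statements merged into one kernel-verified Lean document; each statement's English description precedes it below -/
import Mathlib

section
/- Let p be a prime and let A be an F-finite Noetherian integral domain of characteristic p. If A is strongly F-regular, then A is normal, i.e. A is integrally closed in its field of fractions. -/
/-!
A fraction `x = a / b` integral over `A` has a conductor element: `A[x]` is a finitely generated
`A`-module, so a single non-zerodivisor `c` clears the denominators of all powers of `x`,
i.e. `b ^ n ∣ c * a ^ n` for every `n`. Strong F-regularity applied to `c` gives a
`p ^ e`-linear `ψ` with `ψ (c * a ^ p ^ e) = a`; writing `c * a ^ p ^ e = b ^ p ^ e * t` yields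
`a = b * ψ t`, so `x ∈ A`.
-/

/-- `A` is strongly `F`-regular with respect to the prime `p`: for every
non-zerodivisor `c` there are `e ≥ 0` and an additive map `ψ : A → A` which is
`A`-linear for the `A`-action on the source restricted along the `e`-th Frobenius
power and splits `a ↦ c * a ^ p ^ e`. -/
def IsStronglyFRegular (p : ℕ) (A : Type*) [CommRing A] : Prop :=
  ∀ c : A, (∀ x : A, c * x = 0 → x = 0) →
    ∃ (e : ℕ) (ψ : A →+ A),
      (∀ r x : A, ψ (r ^ p ^ e * x) = r * ψ x) ∧
      ∀ a : A, ψ (c * a ^ p ^ e) = a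

/-- `A` is `F`-finite: the Frobenius endomorphism `a ↦ a ^ p` is a finite ring map. -/
def IsFFinite (p : ℕ) (A : Type*) [CommRing A] [ExpChar A p] : Prop :=
  (frobenius A p).Finite

open nonZeroDivisors

theorem IsStronglyFRegular.dvd_of_forall_dvd_mul_pow {p : ℕ} {A : Type*} [CommRing A]
    (hA : IsStronglyFRegular p A) {a b c : A} (hc : c ∈ A⁰) (h : ∀ n, b ^ n ∣ c * a ^ n) :
    b ∣ a := by
  obtain ⟨e, ψ, hψ, hsplit⟩ := hA c (mem_nonZeroDivisors_iff_left.mp hc)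
  obtain ⟨t, ht⟩ := h (p ^ e)
  exact ⟨ψ t, by rw [← hsplit a, ht, hψ]⟩

theorem IsIntegral.exists_forall_dvd_mul_pow {A K : Type*} [CommRing A] [CommRing K]
    [Algebra A K] [IsFractionRing A K] {a : A} {b : A⁰}
    (hx : IsIntegral A (IsLocalization.mk' K a b)) :
    ∃ c ∈ A⁰, ∀ n, (b : A) ^ n ∣ c * a ^ n := by
  set x := IsLocalization.mk' K a b
  obtain ⟨c, hc, hcx⟩ := FractionalIdeal.isFractional_adjoin_integral A⁰ x hx
  refine ⟨c, hc, fun n => ?_⟩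
  obtain ⟨t, ht⟩ := hcx (x ^ n) (Subalgebra.pow_mem _ (Algebra.self_mem_adjoin_singleton A x) n)
  refine ⟨t, IsFractionRing.injective A K ?_⟩
  calc algebraMap A K (c * a ^ n)
      = c • (x * algebraMap A K b) ^ n := by
        rw [IsLocalization.mk'_spec, Algebra.smul_def, map_mul, map_pow]
    _ = algebraMap A K ((b : A) ^ n * t) := by
        rw [map_mul, map_pow, ht, mul_pow, mul_comm, mul_smul_comm]

theorem isIntegrallyClosed_of_forall_dvd_mul_pow {A : Type*} [CommRing A]
    (H : ∀ {a b c : A}, c ∈ A⁰ → (∀ n, b ^ n ∣ c * a ^ n) → b ∣ a) :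
    IsIntegrallyClosed A := by
  refine (isIntegrallyClosed_iff (FractionRing A)).mpr fun {x} hx => ?_
  obtain ⟨⟨a, b⟩, rfl⟩ := IsLocalization.mk'_surjective A⁰ x
  obtain ⟨c, hc, hdvd⟩ := hx.exists_forall_dvd_mul_pow
  obtain ⟨y, rfl⟩ := H hc hdvd
  exact ⟨y, (IsLocalization.mk'_mul_cancel_left y b).symm⟩

theorem stronglyFRegular_normal_general (p : ℕ) (A : Type*) [CommRing A]
    (hSFR : IsStronglyFRegular p A) :
    IsIntegrallyClosed A :=
  isIntegrallyClosed_of_forall_dvd_mul_pow hSFR.dvd_of_forall_dvd_mul_pow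

/-- A strongly F-regular F-finite Noetherian domain of characteristic p is normal,
i.e. integrally closed in its field of fractions. -/
theorem stronglyFRegular_normal (p : ℕ) [Fact p.Prime] (A : Type*) [CommRing A] [IsDomain A]
    [CharP A p] [IsNoetherianRing A] (hFF : IsFFinite p A)
    (hSFR : IsStronglyFRegular p A) :
    IsIntegrallyClosed A :=
  stronglyFRegular_normal_general p A hSFR
end

section
/- Let p be a prime, A an F-finite Noetherian integral domain of characteristic p, and S ⊆ A a multiplicatively closed subset with 0 ∉ S. If A is strongly F-regular, then the localization S⁻¹A is strongly F-regular. -/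
/-! A splitting `ψ` of `a ↦ c * a ^ q` on `A`, being linear along `r ↦ r ^ q`, extends to
`S⁻¹A` by `a / s ↦ ψ (s ^ (q - 1) * a) / s`: linearity along `r ↦ r ^ q` is exactly what
makes this independent of the representative and additive, and the extension still splits `c`.
A non-zerodivisor of `S⁻¹A` is `x / t` with `x ≠ 0`, hence a non-zerodivisor of the domain `A`;
a splitting of `x = (x / t) * t` in `S⁻¹A`, precomposed with multiplication by `t`, splits
`x / t`. -/

section

variable {A : Type*} [CommRing A]

/-- The map `a ↦ c * a ^ q`, from `A` to `A` viewed as an `A`-module through `r ↦ r ^ q`,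
is a split monomorphism. -/
def FrobeniusSplits (q : ℕ) (c : A) : Prop :=
  ∃ ψ : A →+ A, (∀ r x : A, ψ (r ^ q * x) = r * ψ x) ∧ ∀ a : A, ψ (c * a ^ q) = a

theorem FrobeniusSplits.of_mul_right {q : ℕ} {c d : A} (h : FrobeniusSplits q (c * d)) :
    FrobeniusSplits q c := by
  obtain ⟨ψ, hψ, hsplit⟩ := h
  refine ⟨ψ.comp (AddMonoidHom.mulLeft d), fun r x => ?_, fun a => ?_⟩
  · simp only [AddMonoidHom.comp_apply, AddMonoidHom.coe_mulLeft, mul_left_comm d, hψ]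
  · simpa only [AddMonoidHom.comp_apply, AddMonoidHom.coe_mulLeft, mul_left_comm d, ← mul_assoc,
      mul_comm d c] using hsplit a

namespace IsLocalization

variable {S : Submonoid A} (B : Type*) [CommRing B] [Algebra A B] [IsLocalization S B]
  {n : ℕ} {ψ : A →+ A}

theorem mk'_frobeniusLinear_eq (hψ : ∀ r x : A, ψ (r ^ (n + 1) * x) = r * ψ x) {a₁ a₂ : A}
    {s₁ s₂ : S} (h : mk' B a₁ s₁ = mk' B a₂ s₂) :
    mk' B (ψ (s₁ ^ n * a₁)) s₁ = mk' B (ψ (s₂ ^ n * a₂)) s₂ := by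
  rw [mk'_eq_iff_eq, eq_iff_exists S] at h ⊢
  obtain ⟨u, hu⟩ := h
  refine ⟨u, ?_⟩
  calc (u : A) * (s₂ * ψ (s₁ ^ n * a₁))
      = ψ ((u * s₂ : A) ^ (n + 1) * (s₁ ^ n * a₁)) := by rw [hψ, mul_assoc]
    _ = ψ ((u * s₁ : A) ^ (n + 1) * (s₂ ^ n * a₂)) := by
        congr 1
        linear_combination ((u : A) * s₁ * s₂) ^ n * hu
    _ = (u : A) * (s₁ * ψ (s₂ ^ n * a₂)) := by rw [hψ, mul_assoc]

variable (S) in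
noncomputable def frobeniusLinearExtension (ψ : A →+ A) (n : ℕ) (b : B) : B :=
  mk' B (ψ ((sec S b).2 ^ n * (sec S b).1)) (sec S b).2

variable {B}

theorem frobeniusLinearExtension_mk' (hψ : ∀ r x : A, ψ (r ^ (n + 1) * x) = r * ψ x) (a : A)
    (s : S) : frobeniusLinearExtension S B ψ n (mk' B a s) = mk' B (ψ (s ^ n * a)) s :=
  mk'_frobeniusLinear_eq B hψ (mk'_sec B _)

theorem frobeniusLinearExtension_add (hψ : ∀ r x : A, ψ (r ^ (n + 1) * x) = r * ψ x)
    (b₁ b₂ : B) :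
    frobeniusLinearExtension S B ψ n (b₁ + b₂) =
      frobeniusLinearExtension S B ψ n b₁ + frobeniusLinearExtension S B ψ n b₂ := by
  obtain ⟨⟨a₁, s₁⟩, rfl⟩ := mk'_surjective S b₁
  obtain ⟨⟨a₂, s₂⟩, rfl⟩ := mk'_surjective S b₂
  simp only [← mk'_add, frobeniusLinearExtension_mk' hψ]
  congr 1
  calc ψ (((s₁ * s₂ : S) : A) ^ n * (a₁ * s₂ + a₂ * s₁))
      = ψ ((s₂ : A) ^ (n + 1) * (s₁ ^ n * a₁) + (s₁ : A) ^ (n + 1) * (s₂ ^ n * a₂)) :=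
        by
        push_cast; ring_nf
    _ = ψ (s₁ ^ n * a₁) * s₂ + ψ (s₂ ^ n * a₂) * s₁ := by
        rw [map_add, hψ, hψ, mul_comm, mul_comm (s₁ : A)]

theorem frobeniusLinearExtension_pow_mul (hψ : ∀ r x : A, ψ (r ^ (n + 1) * x) = r * ψ x)
    (r y : B) :
    frobeniusLinearExtension S B ψ n (r ^ (n + 1) * y) =
      r * frobeniusLinearExtension S B ψ n y := by
  obtain ⟨⟨c, u⟩, rfl⟩ := mk'_surjective S r
  obtain ⟨⟨a, s⟩, rfl⟩ := mk'_surjective S y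
  simp only [← mk'_pow, ← mk'_mul, frobeniusLinearExtension_mk' hψ]
  rw [mk'_eq_iff_eq]
  congr 1
  calc ((u * s : S) : A) * ψ (((u ^ (n + 1) * s : S) : A) ^ n * (c ^ (n + 1) * a))
      = (u * s : A) * ψ ((c * u ^ n) ^ (n + 1) * (s ^ n * a)) := by push_cast; ring_nf
    _ = ((u ^ (n + 1) * s : S) : A) * (c * ψ (s ^ n * a)) := by rw [hψ]; push_cast; ring

theorem frobeniusLinearExtension_algebraMap_mul_pow
    (hψ : ∀ r x : A, ψ (r ^ (n + 1) * x) = r * ψ x) {c : A}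
    (hsplit : ∀ a : A, ψ (c * a ^ (n + 1)) = a) (b : B) :
    frobeniusLinearExtension S B ψ n (algebraMap A B c * b ^ (n + 1)) = b := by
  obtain ⟨⟨a, s⟩, rfl⟩ := mk'_surjective S b
  simp only [← mk'_pow, mul_mk'_eq_mk'_of_mul, frobeniusLinearExtension_mk' hψ]
  rw [mk'_eq_iff_eq]
  calc algebraMap A B (s * ψ (((s ^ (n + 1) : S) : A) ^ n * (c * a ^ (n + 1))))
      = algebraMap A B (s * ψ (c * (s ^ n * a) ^ (n + 1))) := by push_cast; ring_nf
    _ = algebraMap A B (((s ^ (n + 1) : S) : A) * a) := by rw [hsplit]; push_cast; ring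

end IsLocalization

theorem FrobeniusSplits.algebraMap (S : Submonoid A) (B : Type*) [CommRing B] [Algebra A B]
    [IsLocalization S B] {q : ℕ} (hq : q ≠ 0) {c : A} (h : FrobeniusSplits q c) :
    FrobeniusSplits q (algebraMap A B c) := by
  obtain ⟨n, rfl⟩ := Nat.exists_eq_add_one_of_ne_zero hq
  obtain ⟨ψ, hψ, hsplit⟩ := h
  exact ⟨AddMonoidHom.mk' (IsLocalization.frobeniusLinearExtension S B ψ n)
      (IsLocalization.frobeniusLinearExtension_add hψ),
    IsLocalization.frobeniusLinearExtension_pow_mul hψ,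
    IsLocalization.frobeniusLinearExtension_algebraMap_mul_pow hψ hsplit⟩

end

theorem stronglyFRegular_localization_general (p : ℕ) [Fact p.Prime] (A : Type*) [CommRing A]
    [IsDomain A] (hSFR : IsStronglyFRegular p A)
    (S : Submonoid A)
    (B : Type*) [CommRing B] [Algebra A B] [IsLocalization S B] :
    IsStronglyFRegular p B := by
  intro c hc
  rcases subsingleton_or_nontrivial B with hB | hB
  · exact ⟨0, 0, fun _ _ => Subsingleton.elim _ _, fun _ => Subsingleton.elim _ _⟩
  obtain ⟨x, t, rfl⟩ := IsLocalization.exists_mk'_eq S c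
  have hx : x ≠ 0 := by
    rintro rfl
    exact one_ne_zero (hc 1 (by rw [IsLocalization.mk'_zero, zero_mul]))
  obtain ⟨e, hxe⟩ : ∃ e, FrobeniusSplits (p ^ e) x :=
    hSFR x fun z hz => (mul_eq_zero.1 hz).resolve_left hx
  have hxB := hxe.algebraMap S B (pow_ne_zero e (Fact.out : p.Prime).ne_zero)
  rw [← IsLocalization.mk'_spec B x t] at hxB
  exact ⟨e, hxB.of_mul_right⟩

/-- Localizations (at multiplicative sets not containing 0) of a strongly F-regular
F-finite Noetherian domain of characteristic p are strongly F-regular. -/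
theorem stronglyFRegular_localization (p : ℕ) [Fact p.Prime] (A : Type*) [CommRing A]
    [IsDomain A] [CharP A p] [IsNoetherianRing A] (hFF : IsFFinite p A)
    (hSFR : IsStronglyFRegular p A)
    (S : Submonoid A) (hS : (0 : A) ∉ S)
    (B : Type*) [CommRing B] [Algebra A B] [IsLocalization S B] :
    IsStronglyFRegular p B :=
  stronglyFRegular_localization_general p A hSFR S B
end

section
/- Let p be a prime and let A be an F-finite Noetherian integral domain of characteristic p. Then A is strongly F-regular if and only if for every maximal ideal m of A the local ring A_m (the localization of A at m) is strongly F-regular. (This is the affine content of Smith's theorem: Spec A is globally F-regular if and only if A is strongly F-regular if and only if Spec A is F-regular.) -/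
/-!
Write `F^e_* A` for `A` viewed as an `A`-module through the `e`-th Frobenius power. Strong
`F`-regularity asks that for every nonzero `c` some `A`-linear `φ : F^e_* A → A` has
`φ (F^e_* c) = 1`, i.e. that `1` lies in the ideal `I_e(c)` of all values `φ (F^e_* c)`.
Localizing such a `φ` gives the forward direction. Conversely, since `F^e_* A` is a finitely
presented `A`-module, every functional on `F^e_* A_m` is, up to a unit of `A_m`, the localization
of one on `F^e_* A`; so a local splitting at `m` yields `I_e(c) ⊄ m`. The exponent `e` depends on
`m`, but the ideals `I_e(c)` increase with `e` once `A` is `F`-split. Locally this holds because a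
splitting `φ` of a non-unit `t` has level `e ≥ 1`, so that `x ↦ φ (t x ^ p ^ (e - 1))` splits
the Frobenius; it globalizes by the same argument. Hence a single `I_e(c)` escapes every maximal
ideal.
-/

/-- `Frob p e B` is the Frobenius pushforward `F^e_* B`: over an `A`-algebra `B`, it is `B`
with the `A`-action `r • x = r ^ p ^ e * x`. -/
def Frob (_p _e : ℕ) (B : Type*) : Type _ := B

namespace Frob

section Algebra

variable (p e : ℕ) {A B : Type*}

def mk (x : B) : Frob p e B := x

def val (x : Frob p e B) : B := x

@[simp] lemma val_mk (x : B) : val p e (mk p e x) = x := rfl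

variable [CommRing A] [CommRing B] [Algebra A B]

instance : AddCommGroup (Frob p e B) := inferInstanceAs (AddCommGroup B)

@[simp] lemma mk_add (x y : B) : mk p e (x + y) = mk p e x + mk p e y := rfl

@[simp] lemma val_add (x y : Frob p e B) : val p e (x + y) = val p e x + val p e y := rfl

variable [ExpChar B p]

instance : Module A (Frob p e B) :=
  Module.compHom B ((iterateFrobenius B p e).comp (algebraMap A B))

lemma smul_mk (r : A) (x : B) : r • mk p e x = mk p e (algebraMap A B r ^ p ^ e * x) := rfl

lemma val_smul (r : A) (x : Frob p e B) :
    val p e (r • x) = algebraMap A B r ^ p ^ e * val p e x :=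
  rfl

instance : IsScalarTower A B (Frob p e B) where
  smul_assoc r b x := by
    rw [Algebra.smul_def]
    change (algebraMap A B r * b) ^ p ^ e * val p e x =
      algebraMap A B r ^ p ^ e * (b ^ p ^ e * val p e x)
    rw [mul_pow, mul_assoc]

variable [ExpChar A p]

variable (A B) in
def mapAlgebra : Frob p e A →ₗ[A] Frob p e B where
  toFun x := mk p e (algebraMap A B (val p e x))
  map_add' x y := by simp
  map_smul' r x := by simp [val_smul, smul_mk]

instance isLocalizedModule_mapAlgebra (S : Submonoid A) [IsLocalization S B] :
    IsLocalizedModule S (mapAlgebra p e A B) := by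
  have hq : p ^ e ≠ 0 := (expChar_pow_pos A p e).ne'
  refine ⟨fun s => ?_, fun y => ?_, fun {x y} hxy => ?_⟩
  · rw [Module.End.isUnit_iff]
    convert MulAction.bijective (β := Frob p e B) (IsLocalization.map_units B s).unit using 1
    funext x
    rw [Module.algebraMap_end_apply, Units.smul_def, IsUnit.unit_spec, algebraMap_smul]
  · obtain ⟨⟨a, s⟩, hs⟩ := IsLocalization.surj S (val p e y)
    refine ⟨⟨mk p e (a * (s : A) ^ (p ^ e - 1)), s⟩, ?_⟩
    change mk p e (algebraMap A B s ^ p ^ e * val p e y) =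
      mk p e (algebraMap A B (a * (s : A) ^ (p ^ e - 1)))
    simp only at hs
    rw [map_mul, map_pow, ← hs, ← pow_sub_one_mul hq]
    ring_nf
  · obtain ⟨c, hc⟩ := IsLocalization.exists_of_eq (M := S) (congrArg (val p e) hxy)
    refine ⟨c, ?_⟩
    change mk p e (c ^ p ^ e * val p e x) = mk p e (c ^ p ^ e * val p e y)
    rw [← pow_sub_one_mul hq, mul_assoc, mul_assoc, hc]

end Algebra

section Ring

variable (p : ℕ) {e : ℕ} {R : Type*} [CommRing R] [ExpChar R p]

lemma mk_pow_mul (r x : R) : mk p e (r ^ p ^ e * x) = r • mk p e x := rfl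

def mulLeft (e : ℕ) (b : R) : Frob p e R →ₗ[R] Frob p e R where
  toFun x := mk p e (b * val p e x)
  map_add' x y := by simp [mul_add]
  map_smul' r x := by
    change mk p e (b * (r ^ p ^ e * val p e x)) = mk p e (r ^ p ^ e * (b * val p e x))
    rw [mul_left_comm]

@[simp] lemma mulLeft_mk (b x : R) : mulLeft p e b (mk p e x) = mk p e (b * x) := rfl

def iterateFrobenius (e k : ℕ) : Frob p e R →ₗ[R] Frob p (e + k) R where
  toFun x := mk p (e + k) (val p e x ^ p ^ k)
  map_add' x y := by simp [add_pow_expChar_pow]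
  map_smul' r x := by simp [val_smul, smul_mk, mul_pow, ← pow_mul, ← pow_add]

def pushforward (e : ℕ) {k : ℕ} (φ : Frob p k R →ₗ[R] R) :
    Frob p (e + k) R →ₗ[R] Frob p e R where
  toFun x := mk p e (φ (mk p k (val p (e + k) x)))
  map_add' x y := by simp
  map_smul' r x := by
    have h : mk p k (val p (e + k) (r • x)) = r ^ p ^ e • mk p k (val p (e + k) x) := by
      simp [val_smul, smul_mk, pow_add, pow_mul]
    change mk p e (φ (mk p k (val p (e + k) (r • x)))) =
      mk p e (r ^ p ^ e * φ (mk p k (val p (e + k) x)))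
    rw [h, map_smul, smul_eq_mul]

lemma finite_of_isFFinite (hFF : IsFFinite p R) (e : ℕ) : Module.Finite R (Frob p e R) := by
  have : (_root_.iterateFrobenius R p e).Finite := by
    induction e with
    | zero => exact iterateFrobenius_zero R p ▸ RingHom.Finite.id R
    | succ e ih => exact iterateFrobenius_add R p e 1 ▸ iterateFrobenius_one R p ▸ ih.comp hFF
  exact this

def evalIdeal (e : ℕ) (c : R) : Ideal R :=
  LinearMap.range (LinearMap.applyₗ (R := R) (M₂ := R) (mk p e c))

lemma mem_evalIdeal {c x : R} :
    x ∈ evalIdeal p e c ↔ ∃ φ : Frob p e R →ₗ[R] R, φ (mk p e c) = x :=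
  Iff.rfl

end Ring

end Frob

/-- `R` is `F`-split: the Frobenius `R → F_* R` splits. -/
def IsFSplit (p : ℕ) (R : Type*) [CommRing R] [ExpChar R p] : Prop :=
  ∃ β : Frob p 1 R →ₗ[R] R, β (Frob.mk p 1 1) = 1

section

variable {p : ℕ} {R : Type*} [CommRing R] [ExpChar R p]

lemma IsFSplit.monotone_evalIdeal (hR : IsFSplit p R) (c : R) :
    Monotone (Frob.evalIdeal p · c) := by
  obtain ⟨β, hβ⟩ := hR
  refine monotone_nat_of_le_succ fun e x hx => ?_
  obtain ⟨φ, rfl⟩ := (Frob.mem_evalIdeal p).1 hx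
  -- `x ↦ β (c ^ (p - 1) * x)` maps `F_* c` to `c`, so its pushforward raises the level of `φ`.
  refine (Frob.mem_evalIdeal p).2
    ⟨φ ∘ₗ Frob.pushforward p e (β ∘ₗ Frob.mulLeft p 1 (c ^ (p - 1))), ?_⟩
  have hc : Frob.mk p 1 (c ^ (p - 1) * c) = c • Frob.mk p 1 1 := by
    rw [pow_sub_one_mul (expChar_pos R p).ne', ← Frob.mk_pow_mul, pow_one, mul_one]
  change φ (Frob.mk p e (β (Frob.mk p 1 (c ^ (p - 1) * c)))) = φ (Frob.mk p e c)
  rw [hc, map_smul, hβ, smul_eq_mul, mul_one]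

lemma isStronglyFRegular_iff_exists_frobLinear :
    IsStronglyFRegular p R ↔ ∀ c : R, (∀ x : R, c * x = 0 → x = 0) →
      ∃ (e : ℕ) (φ : Frob p e R →ₗ[R] R), φ (Frob.mk p e c) = 1 := by
  refine forall₂_congr fun c _ => ⟨?_, ?_⟩
  · rintro ⟨e, ψ, hψ, hc⟩
    refine ⟨e,
      ⟨⟨fun x => ψ (Frob.val p e x), fun x y => ψ.map_add _ _⟩, fun r x => hψ r _⟩, ?_⟩
    change ψ c = 1
    simpa using hc 1
  · rintro ⟨e, φ, hφ⟩
    refine ⟨e, AddMonoidHom.mk' (fun x => φ (Frob.mk p e x)) (by simp), fun r x => ?_,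
      fun a => ?_⟩
    · simp [Frob.mk_pow_mul]
    · simp [mul_comm c, Frob.mk_pow_mul, hφ]

lemma exists_frobLinear_apply_eq_one_of_isUnit {c : R} (hc : IsUnit c) :
    ∃ φ : Frob p 0 R →ₗ[R] R, φ (Frob.mk p 0 c) = 1 :=
  ⟨{ toFun x := ↑hc.unit⁻¹ * Frob.val p 0 x
     map_add' x y := by simp [mul_add]
     map_smul' r x := by simp [Frob.val_smul]; ring },
    by simp⟩

lemma IsStronglyFRegular.isFSplit (h : IsStronglyFRegular p R) {t : R}
    (ht : ∀ x : R, t * x = 0 → x = 0) (ht' : ¬IsUnit t) : IsFSplit p R := by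
  obtain ⟨e, φ, hφ⟩ := isStronglyFRegular_iff_exists_frobLinear.1 h t ht
  obtain ⟨k, rfl⟩ : ∃ k, e = 1 + k := by
    refine ⟨e - 1, (Nat.add_sub_cancel' (Nat.pos_of_ne_zero fun he => ht' ?_)).symm⟩
    subst he
    rw [← pow_one t, ← pow_zero p, ← mul_one (t ^ p ^ 0), Frob.mk_pow_mul, map_smul,
      smul_eq_mul] at hφ
    exact .of_mul_eq_one _ hφ
  refine ⟨φ ∘ₗ Frob.mulLeft p (1 + k) t ∘ₗ Frob.iterateFrobenius p 1 k, ?_⟩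
  change φ (Frob.mk p (1 + k) (t * 1 ^ p ^ k)) = 1
  rwa [one_pow, mul_one]

end

section Localization

variable {p : ℕ} {A B : Type*} [CommRing A] [CommRing B] [Algebra A B] [ExpChar A p]
  (S : Submonoid A) [IsLocalization S B]

lemma Frob.mapExtendScalars_apply_mk [ExpChar B p] {e : ℕ} (φ : Frob p e A →ₗ[A] A) (c : A) :
    IsLocalizedModule.mapExtendScalars S (Frob.mapAlgebra p e A B) (Algebra.linearMap A B) B φ
      (Frob.mk p e (algebraMap A B c)) = algebraMap A B (φ (Frob.mk p e c)) :=
  IsLocalizedModule.map_apply _ _ _ φ (Frob.mk p e c)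

theorem IsStronglyFRegular.of_isLocalization (hS : S ≤ nonZeroDivisors A)
    (h : IsStronglyFRegular p A) : IsStronglyFRegular p B := by
  have hinj := IsLocalization.injective B hS
  have := expChar_of_injective_algebraMap hinj p
  rw [isStronglyFRegular_iff_exists_frobLinear] at h ⊢
  intro c' hc'
  obtain ⟨⟨c, s⟩, hcs⟩ := IsLocalization.surj S c'
  have hc : ∀ x : A, c * x = 0 → x = 0 := fun x hx => by
    have hsx : c' * algebraMap A B (s * x) = 0 := by
      simp only at hcs
      rw [map_mul, ← mul_assoc, hcs, ← map_mul, hx, map_zero]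
    exact (mul_left_mem_nonZeroDivisors_eq_zero_iff (hS s.2)).1
      (hinj ((hc' _ hsx).trans (map_zero _).symm))
  obtain ⟨e, φ, hφ⟩ := h c hc
  refine ⟨e, IsLocalizedModule.mapExtendScalars S (Frob.mapAlgebra p e A B)
    (Algebra.linearMap A B) B φ ∘ₗ Frob.mulLeft p e (algebraMap A B s), ?_⟩
  rw [LinearMap.comp_apply, Frob.mulLeft_mk, mul_comm, hcs, Frob.mapExtendScalars_apply_mk, hφ,
    map_one]

lemma Frob.exists_apply_mem_of_isLocalization [ExpChar B p] (hS : S ≤ nonZeroDivisors A)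
    {e : ℕ} [Module.FinitePresentation A (Frob p e A)] {c : A} (Φ : Frob p e B →ₗ[B] B)
    (hΦ : Φ (Frob.mk p e (algebraMap A B c)) = 1) :
    ∃ φ : Frob p e A →ₗ[A] A, φ (Frob.mk p e c) ∈ S := by
  obtain ⟨⟨φ, s⟩, hs⟩ := IsLocalizedModule.surj S (IsLocalizedModule.mapExtendScalars S
    (Frob.mapAlgebra p e A B) (Algebra.linearMap A B) B) Φ
  have hsφ := LinearMap.congr_fun hs (Frob.mk p e (algebraMap A B c))
  rw [Frob.mapExtendScalars_apply_mk, LinearMap.smul_apply, hΦ, Submonoid.smul_def,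
    Algebra.smul_def, mul_one] at hsφ
  exact ⟨φ, IsLocalization.injective B hS hsφ ▸ s.2⟩

end Localization

lemma Ideal.eq_top_of_forall_not_le_maximal {R : Type*} [CommRing R] {I : Ideal R}
    (h : ∀ m : Ideal R, m.IsMaximal → ¬I ≤ m) : I = ⊤ := by
  by_contra hI
  obtain ⟨m, hm, hIm⟩ := I.exists_le_maximal hI
  exact h m hm hIm

section Domain

variable {p : ℕ} {A : Type*} [CommRing A] [IsDomain A] [ExpChar A p]

lemma Localization.AtPrime.algebraMap_ne_zero (P : Ideal A) [P.IsPrime] {c : A} (hc : c ≠ 0) :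
    algebraMap A (Localization.AtPrime P) c ≠ 0 :=
  (map_ne_zero_iff _ (IsLocalization.injective _ P.primeCompl_le_nonZeroDivisors)).2 hc

instance Localization.AtPrime.expChar (P : Ideal A) [P.IsPrime] :
    ExpChar (Localization.AtPrime P) p :=
  expChar_of_injective_algebraMap (IsLocalization.injective _ P.primeCompl_le_nonZeroDivisors) p

lemma IsStronglyFRegular.isFSplit_atPrime {P : Ideal A} [P.IsPrime] (hP : P ≠ ⊥)
    (h : IsStronglyFRegular p (Localization.AtPrime P)) : IsFSplit p (Localization.AtPrime P) := by
  obtain ⟨t, htP, ht⟩ := P.ne_bot_iff.1 hP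
  refine h.isFSplit (t := algebraMap A _ t) ?_ ?_
  · exact fun x hx =>
      (mul_eq_zero.1 hx).resolve_left (Localization.AtPrime.algebraMap_ne_zero P ht)
  · exact (IsLocalization.AtPrime.isUnit_to_map_iff _ P t).not.2 (not_not.2 htP)

variable [IsNoetherianRing A]

lemma Frob.evalIdeal_not_le_of_localization (hFF : IsFFinite p A) (P : Ideal A) [P.IsPrime]
    {e : ℕ} {c : A}
    (Φ : Frob p e (Localization.AtPrime P) →ₗ[Localization.AtPrime P] Localization.AtPrime P)
    (hΦ : Φ (Frob.mk p e (algebraMap A _ c)) = 1) : ¬Frob.evalIdeal p e c ≤ P := by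
  have := Frob.finite_of_isFFinite p hFF e
  have := Module.finitePresentation_of_finite A (Frob p e A)
  obtain ⟨φ, hφ⟩ := Frob.exists_apply_mem_of_isLocalization P.primeCompl
    P.primeCompl_le_nonZeroDivisors Φ hΦ
  exact fun hle => hφ (hle ⟨φ, rfl⟩)

lemma IsFSplit.of_localizations (hFF : IsFFinite p A)
    (hloc : ∀ (m : Ideal A) [m.IsMaximal], IsFSplit p (Localization.AtPrime m)) :
    IsFSplit p A := by
  suffices Frob.evalIdeal p 1 (1 : A) = ⊤ from
    (Frob.mem_evalIdeal p).1 (this ▸ Submodule.mem_top)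
  refine Ideal.eq_top_of_forall_not_le_maximal fun m _ => ?_
  obtain ⟨β, hβ⟩ := hloc m
  exact Frob.evalIdeal_not_le_of_localization hFF m β (by rwa [map_one])

theorem IsStronglyFRegular.of_localizations (hFF : IsFFinite p A)
    (hloc : ∀ (m : Ideal A) [m.IsMaximal], IsStronglyFRegular p (Localization.AtPrime m)) :
    IsStronglyFRegular p A := by
  rw [isStronglyFRegular_iff_exists_frobLinear]
  intro c hc
  by_cases hcu : IsUnit c
  · exact ⟨0, exists_frobLinear_apply_eq_one_of_isUnit hcu⟩
  have hc0 : c ≠ 0 := fun h => one_ne_zero (hc 1 (by rw [h, zero_mul]))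
  have hA : ¬IsField A := fun hA => hcu (.of_mul_eq_one _ (hA.mul_inv_cancel hc0).choose_spec)
  have hsplit : IsFSplit p A := .of_localizations hFF fun m _ =>
    (hloc m).isFSplit_atPrime (Ideal.bot_lt_of_maximal m hA).ne'
  have htop : ⨆ e, Frob.evalIdeal p e c = ⊤ :=
    Ideal.eq_top_of_forall_not_le_maximal fun m _ hle => by
      obtain ⟨e, Φ, hΦ⟩ := isStronglyFRegular_iff_exists_frobLinear.1 (hloc m) _ fun x hx =>
        (mul_eq_zero.1 hx).resolve_left (Localization.AtPrime.algebraMap_ne_zero m hc0)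
      exact Frob.evalIdeal_not_le_of_localization hFF m Φ hΦ ((le_iSup _ e).trans hle)
  exact (Submodule.mem_iSup_of_directed _ (hsplit.monotone_evalIdeal c).directed_le).1
    (htop ▸ Submodule.mem_top)

end Domain

/-- An F-finite Noetherian domain of characteristic p is strongly F-regular if and
only if all its localizations at maximal ideals are strongly F-regular. -/
theorem stronglyFRegular_iff_localizations (p : ℕ) [Fact p.Prime] (A : Type*) [CommRing A]
    [IsDomain A] [CharP A p] [IsNoetherianRing A] (hFF : IsFFinite p A) :
    IsStronglyFRegular p A ↔
      ∀ (m : Ideal A) [m.IsMaximal], IsStronglyFRegular p (Localization.AtPrime m) :=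
  ⟨fun h m _ => h.of_isLocalization m.primeCompl m.primeCompl_le_nonZeroDivisors,
    IsStronglyFRegular.of_localizations hFF⟩
end

section
/- Let p be a prime and let A ⊆ B be an extension of F-finite Noetherian integral domains of characteristic p such that the inclusion A → B admits an A-linear retraction π : B → A (i.e. π is A-linear and π(a) = a for all a ∈ A). If B is strongly F-regular, then A is strongly F-regular. (This is the affine/ring-theoretic content of the lemma that a surjection with O_Y ≅ f_*O_X from a globally F-regular variety forces the target to be globally F-regular.) -/
/-- If an extension `A ⊆ B` of F-finite Noetherian domains of characteristic p admits
an A-linear retraction and B is strongly F-regular, then A is strongly F-regular. -/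
theorem stronglyFRegular_of_retract (p : ℕ) [Fact p.Prime]
    (A : Type*) [CommRing A] [IsDomain A] [CharP A p] [IsNoetherianRing A]
    (B : Type*) [CommRing B] [IsDomain B] [CharP B p] [IsNoetherianRing B]
    (hFFA : IsFFinite p A) (hFFB : IsFFinite p B)
    [Algebra A B] (hinj : Function.Injective (algebraMap A B))
    (π : B →ₗ[A] A) (hπ : ∀ a : A, π (algebraMap A B a) = a)
    (hSFR : IsStronglyFRegular p B) :
    IsStronglyFRegular p A := by
  intro c hc
  have hc0 : c ≠ 0 := fun h => one_ne_zero (hc 1 (by simp [h]))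
  have hcB : ∀ x : B, algebraMap A B c * x = 0 → x = 0 := by
    intro x hx
    rcases mul_eq_zero.mp hx with h | h
    · exact absurd (hinj (by simpa using h)) hc0
    · exact h
  obtain ⟨e, ψ, h1, h2⟩ := hSFR (algebraMap A B c) hcB
  refine ⟨e, AddMonoidHom.mk' (fun a => π (ψ (algebraMap A B a)))
    (fun x y => by simp [map_add]), ?_, ?_⟩
  · intro r x
    simp only [AddMonoidHom.mk'_apply]
    rw [map_mul, map_pow, h1, ← Algebra.smul_def, map_smul, smul_eq_mul]
  · intro a
    simp only [AddMonoidHom.mk'_apply]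
    rw [map_mul, map_pow, h2, hπ]
end

section
/- Let p be a prime and let A be an F-finite Noetherian integral domain of characteristic p. Suppose there exists a nonzero element c ∈ A such that (i) the localization A[1/c] is strongly F-regular, and (ii) there exist e ≥ 0 and an additive map ψ : A → A with ψ(r^{p^e}·x) = r·ψ(x) for all r, x ∈ A and ψ(c·a^{p^e}) = a for all a ∈ A. Then A is strongly F-regular. (This is the ring-theoretic content of criterion 3 ⇒ 4 in Smith's theorem on global F-regularity, used to deduce that an F-regular Schubert variety admitting a Frobenius splitting along an ample divisor is globally F-regular.) -/
section Splitting

variable {A : Type*} [CommRing A]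

def IsPowLinear (q : ℕ) (ψ : A →+ A) : Prop :=
  ∀ r x : A, ψ (r ^ q * x) = r * ψ x

/-- `IsStronglyFRegular p A` unfolds to: `FSplitsAlong p c` for every non-zerodivisor `c`. -/
def FSplitsAlong (p : ℕ) (c : A) : Prop :=
  ∃ (e : ℕ) (ψ : A →+ A), IsPowLinear (p ^ e) ψ ∧ ∀ a : A, ψ (c * a ^ p ^ e) = a

namespace IsPowLinear

variable {q₁ q₂ : ℕ} {ψ₁ ψ₂ : A →+ A}

theorem comp (h₁ : IsPowLinear q₁ ψ₁) (h₂ : IsPowLinear q₂ ψ₂) :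
    IsPowLinear (q₂ * q₁) (ψ₂.comp ψ₁) := fun r x => by
  rw [AddMonoidHom.comp_apply, pow_mul, h₁, h₂, AddMonoidHom.comp_apply]

theorem comp_mulLeft (h : IsPowLinear q₁ ψ₁) (b : A) :
    IsPowLinear q₁ (ψ₁.comp (AddMonoidHom.mulLeft b)) := fun r x => by
  simp only [AddMonoidHom.comp_apply, AddMonoidHom.coe_mulLeft]
  rw [mul_left_comm, h]

end IsPowLinear

namespace FSplitsAlong

variable {p : ℕ}

theorem one : FSplitsAlong p (1 : A) :=
  ⟨0, AddMonoidHom.id A, fun r x => by simp, fun a => by simp⟩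

theorem of_dvd {c d : A} (hc : FSplitsAlong p c) (hdc : d ∣ c) : FSplitsAlong p d := by
  obtain ⟨e, ψ, hψ, hsplit⟩ := hc
  obtain ⟨b, rfl⟩ := hdc
  refine ⟨e, ψ.comp (AddMonoidHom.mulLeft b), hψ.comp_mulLeft b, fun a => ?_⟩
  simp only [AddMonoidHom.comp_apply, AddMonoidHom.coe_mulLeft]
  rw [← mul_assoc, mul_comm b d, hsplit]

theorem of_isPowLinear {b d : A} (hb : FSplitsAlong p b) {e : ℕ} {η : A →+ A}
    (hη : IsPowLinear (p ^ e) η) (hηd : ∀ a, η (d * a ^ p ^ e) = b * a) :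
    FSplitsAlong p d := by
  obtain ⟨e', ψ, hψ, hsplit⟩ := hb
  refine ⟨e' + e, ψ.comp η, ?_, fun a => ?_⟩
  · rw [pow_add]
    exact hη.comp hψ
  · rw [AddMonoidHom.comp_apply, pow_add, pow_mul, hηd, hsplit]

theorem mul (hp : p ≠ 0) {c₁ c₂ : A} (h₁ : FSplitsAlong p c₁) (h₂ : FSplitsAlong p c₂) :
    FSplitsAlong p (c₁ * c₂) := by
  obtain ⟨e, ψ, hψ, hsplit⟩ := h₁
  refine (h₂.of_isPowLinear (d := c₁ * c₂ ^ p ^ e) hψ fun a => ?_).of_dvd ?_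
  · rw [mul_assoc, ← mul_pow, hsplit]
  · exact mul_dvd_mul_left c₁ (dvd_pow_self c₂ (pow_ne_zero e hp))

theorem pow (hp : p ≠ 0) {c : A} (hc : FSplitsAlong p c) : ∀ n : ℕ, FSplitsAlong p (c ^ n)
  | 0 => by simpa using one
  | n + 1 => by
    rw [pow_succ]
    exact (hc.pow hp n).mul hp hc

end FSplitsAlong

end Splitting

theorem RingHom.Finite.pow {A : Type*} [CommRing A] {f : A →+* A} (hf : f.Finite) :
    ∀ n : ℕ, (f ^ n).Finite
  | 0 => RingHom.Finite.id A
  | n + 1 => by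
    rw [pow_succ, RingHom.mul_def]
    exact (hf.pow n).comp hf

namespace IsLocalization

variable {R S : Type*} [CommRing R] [CommRing S] [Algebra R S]
  (M : Submonoid R) [IsLocalization M S]

theorem exists_smul_isInteger_of_finite {P : Type*} [AddCommGroup P] [Module R P]
    [Module.Finite R P] (g : P →ₗ[R] S) : ∃ m : M, ∀ x, IsInteger R ((m : R) • g x) := by
  obtain ⟨s, hs⟩ := Module.Finite.fg_top (R := R) (M := P)
  obtain ⟨m, hm⟩ := exist_integer_multiples M s g
  refine ⟨m, fun x => ?_⟩
  have hx : x ∈ Submodule.span R (s : Set P) := hs ▸ Submodule.mem_top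
  induction hx using Submodule.span_induction with
  | mem y hy => exact hm y hy
  | zero => simpa using isInteger_zero
  | add y z _ _ hy hz => simpa [smul_add] using isInteger_add hy hz
  | smul r y _ hy =>
    rw [map_smul, smul_comm]
    exact isInteger_smul hy

theorem exists_smul_isInteger_of_ringHomFinite {T : Type*} [CommRing T] {f : R →+* T}
    (hf : f.Finite) (θ : T →+ S) (hθ : ∀ r x, θ (f r * x) = algebraMap R S r * θ x) :
    ∃ m : M, ∀ x, IsInteger R ((m : R) • θ x) := by
  let := f.toAlgebra
  have : Module.Finite R T := hf
  exact exists_smul_isInteger_of_finite M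
    { θ with
      map_smul' := fun r x => by
        simpa [Algebra.smul_def, RingHom.algebraMap_toAlgebra] using hθ r x }

theorem exists_isPowLinear_of_fSplitsAlong_algebraMap {p : ℕ} [ExpChar R p]
    (hM : M ≤ nonZeroDivisors R) (hfin : (frobenius R p).Finite) {d : R}
    (hd : FSplitsAlong p (algebraMap R S d)) :
    ∃ (e : ℕ) (m : M) (η : R →+ R), IsPowLinear (p ^ e) η ∧ ∀ a, η (d * a ^ p ^ e) = m * a := by
  obtain ⟨e, φ, hφ, hsplit⟩ := hd
  have hinj := IsLocalization.injective S hM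
  let θ : R →+ S := φ.comp (algebraMap R S).toAddMonoidHom
  have hθ (r x : R) : θ (r ^ p ^ e * x) = algebraMap R S r * θ x := by
    simpa [θ] using hφ (algebraMap R S r) (algebraMap R S x)
  obtain ⟨m, hm⟩ := exists_smul_isInteger_of_ringHomFinite M
    (f := iterateFrobenius R p e) (by rw [iterateFrobenius_eq_pow]; exact hfin.pow e) θ
    (by simpa [iterateFrobenius_def] using hθ)
  choose η hη using hm
  refine ⟨e, m, AddMonoidHom.mk' η fun x y => hinj ?_, fun r x => hinj ?_, fun a => hinj ?_⟩
  · simp [hη]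
  · simp [hη, hθ]
  · simp [hη, θ, hsplit, Algebra.smul_def]

end IsLocalization

theorem stronglyFRegular_of_splitting_and_localization_general (p : ℕ) [Fact p.Prime]
    (A : Type*) [CommRing A] [IsDomain A] [CharP A p]
    (hFF : IsFFinite p A) (c : A) (hc : c ≠ 0)
    (hloc : IsStronglyFRegular p (Localization.Away c))
    (e : ℕ) (ψ : A →+ A)
    (hψ : ∀ r x : A, ψ (r ^ p ^ e * x) = r * ψ x)
    (hsplit : ∀ a : A, ψ (c * a ^ p ^ e) = a) :
    IsStronglyFRegular p A := by
  have hp : p ≠ 0 := (Fact.out : p.Prime).ne_zero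
  have hc₀ : Submonoid.powers c ≤ nonZeroDivisors A :=
    powers_le_nonZeroDivisors_of_noZeroDivisors hc
  intro d hd
  have hdL := IsLocalization.nonZeroDivisors_le_comap (Submonoid.powers c) (Localization.Away c)
    (mem_nonZeroDivisors_iff_left.mpr hd)
  obtain ⟨e₁, ⟨_, N, rfl⟩, η, hη, hηd⟩ :=
    IsLocalization.exists_isPowLinear_of_fSplitsAlong_algebraMap (Submonoid.powers c) hc₀ hFF
      (hloc _ (mem_nonZeroDivisors_iff_left.mp hdL))
  exact (FSplitsAlong.pow hp ⟨e, ψ, hψ, hsplit⟩ N).of_isPowLinear hη hηd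

/-- Smith's criterion: if `A[1/c]` is strongly F-regular and the map
`a ↦ c * a ^ p ^ e` splits for some `e`, then `A` is strongly F-regular. -/
theorem stronglyFRegular_of_splitting_and_localization (p : ℕ) [Fact p.Prime]
    (A : Type*) [CommRing A] [IsDomain A] [CharP A p] [IsNoetherianRing A]
    (hFF : IsFFinite p A) (c : A) (hc : c ≠ 0)
    (hloc : IsStronglyFRegular p (Localization.Away c))
    (e : ℕ) (ψ : A →+ A)
    (hψ : ∀ r x : A, ψ (r ^ p ^ e * x) = r * ψ x)
    (hsplit : ∀ a : A, ψ (c * a ^ p ^ e) = a) :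
    IsStronglyFRegular p A :=
  stronglyFRegular_of_splitting_and_localization_general p A hFF c hc hloc e ψ hψ hsplit
end

section
/- Let p be a prime and let A be a strongly F-regular F-finite Noetherian integral domain of characteristic p. Then every ideal of A is tightly closed: for any ideal I ⊆ A, any x ∈ A, and any nonzero c ∈ A, if c·x^{p^e} belongs to the ideal I^{[p^e]} generated by { a^{p^e} : a ∈ I } for every e ≥ 0, then x ∈ I. (In particular A is weakly F-regular, hence F-rational.) -/
/-- In a strongly F-regular F-finite Noetherian domain of characteristic p, every
ideal is tightly closed. -/
theorem stronglyFRegular_ideals_tightlyClosed (p : ℕ) [Fact p.Prime]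
    (A : Type*) [CommRing A] [IsDomain A] [CharP A p] [IsNoetherianRing A]
    (hFF : IsFFinite p A) (hSFR : IsStronglyFRegular p A)
    (I : Ideal A) (x c : A) (hc : c ≠ 0)
    (h : ∀ e : ℕ, c * x ^ p ^ e ∈ Ideal.span ((fun a : A => a ^ p ^ e) '' (I : Set A))) :
    x ∈ I := by
  obtain ⟨e, ψ, hlin, hsplit⟩ := hSFR c (fun y hy => by
    rcases mul_eq_zero.mp hy with h' | h'
    · exact absurd h' hc
    · exact h')
  obtain ⟨f, hsupp, hsum⟩ := Submodule.mem_span_set.mp (h e)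
  have : x = f.sum fun a b => ψ (b * a) := by
    rw [← hsplit x, ← hsum, map_finsuppSum]
    simp [smul_eq_mul]
  rw [this]
  refine Submodule.sum_mem _ fun a ha => ?_
  obtain ⟨a', ha', rfl⟩ := hsupp ha
  beta_reduce
  rw [mul_comm, hlin]
  exact I.mul_mem_right _ ha'
end
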